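/- arXiv:2106.03221 — 2 statements merged into one kernel-verified Lean document; each statement's English description precedes it below -/
import Mathlib

section
/- Let T ≥ 1 be an integer and let R ≥ 1 and N > 0 be reals with (N/R)^{1/T} > 4. Let Q_1 ≤ Q_2 ≤ … ≤ Q_T be any nondecreasing sequence of positive reals with Q_1 ≥ R and Q_1 + … + Q_T ≥ N. Then there exists x ∈ [R, N] such that every subset S ⊆ {1,…,T} with Σ_{s∈S} Q_s > x satisfies Σ_{s∈S} Q_s ≥ (1/8)·(N/R)^{1/T}·x. -/
/-- **Scheduling lemma.** For any nondecreasing positive batch schedule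
`Q 1 ≤ ⋯ ≤ Q T` with `Q 1 ≥ R` and total at least `N`, there is a target
`x ∈ [R, N]` such that every subset of batches whose total exceeds `x`
overshoots it by a factor of at least `(1/8) · (N/R)^{1/T}`. -/
theorem scheduling_lemma (T : ℕ) (hT : 1 ≤ T) (R N : ℝ) (hR : 1 ≤ R) (hN : 0 < N)
    (hratio : 4 < (N / R) ^ ((1 : ℝ) / T))
    (Q : ℕ → ℝ)
    (hpos : ∀ s ∈ Finset.Icc 1 T, 0 < Q s)
    (hmono : ∀ i ∈ Finset.Icc 1 T, ∀ j ∈ Finset.Icc 1 T, i ≤ j → Q i ≤ Q j)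
    (hfirst : R ≤ Q 1)
    (hsum : N ≤ ∑ s ∈ Finset.Icc 1 T, Q s) :
    ∃ x ∈ Set.Icc R N, ∀ S ⊆ Finset.Icc 1 T,
      x < ∑ s ∈ S, Q s → (1 / 8) * (N / R) ^ ((1 : ℝ) / T) * x ≤ ∑ s ∈ S, Q s := by
  classical
  set c := (N / R) ^ ((1 : ℝ) / T) with hc
  have hR0 : (0 : ℝ) < R := lt_of_lt_of_le one_pos hR
  have hNR : (0 : ℝ) < N / R := div_pos hN hR0
  have hT0 : ((T : ℝ)) ≠ 0 := by
    exact Nat.cast_ne_zero.mpr (by omega)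
  have hcT : c ^ T = N / R := by
    rw [hc, ← Real.rpow_natCast ((N / R) ^ ((1 : ℝ) / T)) T, ← Real.rpow_mul hNR.le,
      one_div, inv_mul_cancel₀ hT0, Real.rpow_one]
  have hc4 : (4 : ℝ) < c := hratio
  have hc1 : (1 : ℝ) < c := by linarith
  have hNRge : R ≤ N := by
    have h1 : (1 : ℝ) ≤ c ^ T := one_le_pow₀ hc1.le
    have : R ≤ N / R * R := by
      rw [← hcT]; nlinarith
    rwa [div_mul_cancel₀ _ hR0.ne'] at this
  set P : ℕ → ℝ := fun t => ∑ s ∈ Finset.Icc 1 t, Q s with hP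
  set M : ℕ → ℝ := fun t => max (P t) R with hM
  have hM0 : M 0 = R := by
    simp [hM, hP, max_eq_right hR0.le]
  have hMR : ∀ t, R ≤ M t := fun t => le_max_right _ _
  have hMpos : ∀ t, 0 < M t := fun t => lt_of_lt_of_le hR0 (hMR t)
  have hPM : ∀ t, P t ≤ M t := fun t => le_max_left _ _
  have hQnn : ∀ s ∈ Finset.Icc 1 T, 0 ≤ Q s := fun s hs => (hpos s hs).le
  have hPmono : ∀ m m', m ≤ m' → m' ≤ T → P m ≤ P m' := by
    intro m m' hmm hm'T
    apply Finset.sum_le_sum_of_subset_of_nonneg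
    · exact Finset.Icc_subset_Icc_right hmm
    · intro s hs _
      exact hQnn s (Finset.Icc_subset_Icc_right hm'T hs)
  have hPsucc : ∀ k, P (k + 1) = P k + Q (k + 1) := by
    intro k
    simp only [hP]
    rw [Finset.sum_Icc_succ_top (Nat.one_le_iff_ne_zero.mpr (Nat.succ_ne_zero k))]
  -- key inductive bound under badness
  have bad_bound : ∀ k, k ≤ T → (∀ t', 1 ≤ t' → t' ≤ k → Q t' < c / 8 * M (t' - 1)) →
      (k = 0 ∨ M k < c ^ k * R) := by
    intro k
    induction k with
    | zero => intro _ _; exact Or.inl rfl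
    | succ k ih =>
      intro hkT hbad
      right
      have hbadk : Q (k + 1) < c / 8 * M k := by
        have := hbad (k + 1) (Nat.le_add_left 1 k) le_rfl
        simpa using this
      have hMk : M k ≤ c ^ k * R := by
        rcases ih (Nat.le_of_succ_le hkT) (fun t' h1 h2 => hbad t' h1 (Nat.le_succ_of_le h2)) with
          h0 | hlt
        · rw [h0, hM0]; simp
        · exact hlt.le
      have hPk1 : P (k + 1) < c * M k := by
        rw [hPsucc k]
        have := hPM k
        nlinarith [hMpos k]
      have hRlt : R < c * M k := by
        nlinarith [hMR k, hMpos k]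
      have : M (k + 1) < c * M k := max_lt hPk1 hRlt
      calc M (k + 1) < c * M k := this
        _ ≤ c * (c ^ k * R) := by nlinarith
        _ = c ^ (k + 1) * R := by ring
  -- there is a good index
  have hexists : ∃ t, (1 ≤ t ∧ t ≤ T) ∧ c / 8 * M (t - 1) ≤ Q t := by
    by_contra h
    push_neg at h
    have hball : ∀ t', 1 ≤ t' → t' ≤ T → Q t' < c / 8 * M (t' - 1) := by
      intro t' h1 h2
      exact h t' ⟨h1, h2⟩
    rcases bad_bound T le_rfl hball with h0 | hlt
    · omega
    · have hPT : N ≤ P T := hsum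
      have : N ≤ M T := le_trans hPT (hPM T)
      rw [hcT, div_mul_cancel₀ _ hR0.ne'] at hlt
      linarith
  -- minimal good index
  set t := Nat.find hexists with htdef
  have ht := Nat.find_spec hexists
  have htmin : ∀ t' < t, ¬ ((1 ≤ t' ∧ t' ≤ T) ∧ c / 8 * M (t' - 1) ≤ Q t') :=
    fun t' ht' => Nat.find_min hexists ht'
  obtain ⟨⟨ht1, htT⟩, hgood⟩ := ht
  -- x := M (t - 1)
  refine ⟨M (t - 1), ⟨hMR _, ?_⟩, ?_⟩
  · -- M (t-1) ≤ N
    rcases Nat.eq_or_lt_of_le ht1 with h1 | h2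
    · have ht1' : t = 1 := by omega
      rw [ht1']
      simpa [hM0] using hNRge
    · have hbadlt : ∀ t', 1 ≤ t' → t' ≤ t - 1 → Q t' < c / 8 * M (t' - 1) := by
        intro t' h1' h2'
        have ht'lt : t' < t := by omega
        have := htmin t' ht'lt
        simp only [not_and] at this
        by_contra hge
        push_neg at hge
        exact this ⟨h1', by omega⟩ hge
      rcases bad_bound (t - 1) (by omega) hbadlt with h0 | hlt
      · omega
      · have hcle : c ^ (t - 1) * R ≤ c ^ T * R := by
          have := pow_le_pow_right₀ hc1.le (show t - 1 ≤ T by omega)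
          nlinarith
        rw [hcT, div_mul_cancel₀ _ hR0.ne'] at hcle
        linarith
  · intro S hS hx
    -- S nonempty
    have hSne : S.Nonempty := by
      rcases Finset.eq_empty_or_nonempty S with h | h
      · exfalso; rw [h] at hx; simp at hx
        have := hMR (t - 1); linarith
      · exact h
    set m := S.max' hSne with hm
    have hmS : m ∈ S := S.max'_mem hSne
    have hmIcc : m ∈ Finset.Icc 1 T := hS hmS
    have hm1 : 1 ≤ m := (Finset.mem_Icc.mp hmIcc).1
    have hmT : m ≤ T := (Finset.mem_Icc.mp hmIcc).2
    have hSsub : S ⊆ Finset.Icc 1 m := by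
      intro s hs
      have hsIcc := hS hs
      exact Finset.mem_Icc.mpr ⟨(Finset.mem_Icc.mp hsIcc).1, S.le_max' s hs⟩
    have hSP : ∑ s ∈ S, Q s ≤ P m := by
      apply Finset.sum_le_sum_of_subset_of_nonneg hSsub
      intro s hs _
      exact hQnn s (Finset.Icc_subset_Icc_right hmT hs)
    have htm : t ≤ m := by
      by_contra hlt
      push_neg at hlt
      have : P m ≤ P (t - 1) := hPmono m (t - 1) (by omega) (by omega)
      have hPx : P (t - 1) ≤ M (t - 1) := hPM _
      linarith
    have hQtm : Q t ≤ Q m := hmono t (Finset.mem_Icc.mpr ⟨ht1, htT⟩) m hmIcc htm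
    have hQmS : Q m ≤ ∑ s ∈ S, Q s := by
      apply Finset.single_le_sum (fun s hs => hQnn s (hS hs)) hmS
    have : c / 8 * M (t - 1) ≤ ∑ s ∈ S, Q s := le_trans hgood (le_trans hQtm hQmS)
    calc (1 / 8 : ℝ) * c * M (t - 1) = c / 8 * M (t - 1) := by ring
      _ ≤ ∑ s ∈ S, Q s := this
end

section
/- For every δ ∈ (0,1), d(δ, 1−δ) ≥ log(1/(2.4·δ)). -/
private lemma log_ge_one_sub_inv {t : ℝ} (ht : 0 < t) : 1 - 1/t ≤ Real.log t := by
  have h := Real.log_le_sub_one_of_pos (show (0:ℝ) < 1/t by positivity)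
  rw [one_div, Real.log_inv] at h
  rw [one_div]
  linarith

private lemma log_five_lt : Real.log 5 < 1.61 := by
  have e1 : (2.7182818:ℝ) < Real.exp 1 := by
    have := Real.exp_one_gt_d9; norm_num at this ⊢; linarith
  have h : (5:ℝ)^(100:ℕ) < Real.exp 1 ^ (161:ℕ) := by
    calc (5:ℝ)^(100:ℕ) < (2.7182818:ℝ)^(161:ℕ) := by norm_num
    _ < Real.exp 1 ^ (161:ℕ) := by
        exact pow_lt_pow_left₀ e1 (by norm_num) (by norm_num)
  have h2 := Real.log_lt_log (by positivity) h
  rw [Real.log_pow, Real.log_pow, Real.log_exp] at h2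
  push_cast at h2
  linarith

/-- For every `δ ∈ (0,1)`, the binary relative entropy satisfies
`d(δ, 1−δ) = δ·log(δ/(1−δ)) + (1−δ)·log((1−δ)/δ) ≥ log(1/(2.4·δ))`. -/
theorem binary_relative_entropy_delta_bound (δ : ℝ) (hδ0 : 0 < δ) (hδ1 : δ < 1) :
    Real.log (1 / (2.4 * δ)) ≤
      δ * Real.log (δ / (1 - δ)) + (1 - δ) * Real.log ((1 - δ) / δ) := by
  have h1 : (0:ℝ) < 1 - δ := by linarith
  have hδ0' := hδ0.ne'
  have h1' := h1.ne'
  have hA : (0.6931471803:ℝ) < Real.log 2 := Real.log_two_gt_d9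
  have hlog5 := log_five_lt
  have h6 : Real.log 5 ≤ Real.log 2 + Real.log 3 := by
    rw [← Real.log_mul (by norm_num) (by norm_num)]
    exact Real.log_le_log (by norm_num) (by norm_num)
  have h24 : Real.log 2.4 = 2*Real.log 2 + Real.log 3 - Real.log 5 := by
    rw [show (2.4:ℝ) = 2*2*3/5 by norm_num,
      Real.log_div (by norm_num) (by norm_num),
      Real.log_mul (by norm_num) (by norm_num),
      Real.log_mul (by norm_num) (by norm_num)]
    ring
  have key : 0 ≤ (1-2*δ) * Real.log (1-δ) + 2*δ * Real.log δ + Real.log 2.4 := by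
    rw [h24]
    rcases le_total δ (1/2) with hc | hc
    · -- δ ≤ 1/2
      have t1 : 1 - 2/(3*(1-δ)) ≤ Real.log 3 + Real.log (1-δ) - Real.log 2 := by
        have h := log_ge_one_sub_inv (show (0:ℝ) < 3*(1-δ)/2 by linarith)
        rw [Real.log_div (by positivity) two_ne_zero,
          Real.log_mul (by norm_num) h1', one_div_div] at h
        linarith
      have t2 : 1 - 1/(3*δ) ≤ Real.log 3 + Real.log δ := by
        have h := log_ge_one_sub_inv (show (0:ℝ) < 3*δ by linarith)
        rw [Real.log_mul (by norm_num) hδ0'] at h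
        linarith
      have c1 : (0:ℝ) ≤ 1 - 2*δ := by linarith
      have P1 := mul_le_mul_of_nonneg_left t1 c1
      have P2 := mul_le_mul_of_nonneg_left t2 (by linarith : (0:ℝ) ≤ 2*δ)
      have Q := mul_le_mul_of_nonneg_left hA.le (by linarith : (0:ℝ) ≤ 3 - 2*δ)
      have RAT : (1.61:ℝ) ≤ 1/3 - (2/3)*((1-2*δ)/(1-δ)) + (3-2*δ)*0.6931471803 := by
        have key0 : (0:ℝ) ≤ 1/3*(1-δ) - (2/3)*(1-2*δ) + (3-2*δ)*0.6931471803*(1-δ) - 1.61*(1-δ) := by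
          nlinarith [sq_nonneg (δ - 0.3086)]
        have e : (2/3)*((1-2*δ)/(1-δ)) * (1-δ) = (2/3)*(1-2*δ) := by
          field_simp
        nlinarith [key0, e, h1]
      have E1 : (1-2*δ)*(1 - 2/(3*(1-δ))) = (1-2*δ) - (2/3)*((1-2*δ)/(1-δ)) := by
        field_simp
      have E2 : 2*δ*(1 - 1/(3*δ)) = 2*δ - 2/3 := by
        field_simp
      linarith [P1, P2, Q, RAT, hlog5, E1, E2]
    · -- 1/2 ≤ δ
      have t3 : 1 - 2*(1-δ) ≤ -(Real.log 2 + Real.log (1-δ)) := by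
        have h := log_ge_one_sub_inv (show (0:ℝ) < 1/(2*(1-δ)) by positivity)
        rw [one_div_one_div] at h
        rw [show (1:ℝ)/(2*(1-δ)) = (2*(1-δ))⁻¹ from one_div _, Real.log_inv,
          Real.log_mul two_ne_zero h1'] at h
        linarith
      have t4 : 1 - 1/(2*δ) ≤ Real.log 2 + Real.log δ := by
        have h := log_ge_one_sub_inv (show (0:ℝ) < 2*δ by linarith)
        rw [Real.log_mul two_ne_zero hδ0'] at h
        linarith
      have c2 : (0:ℝ) ≤ 2*δ - 1 := by linarith
      have P3 := mul_le_mul_of_nonneg_left t3 c2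
      have P4 := mul_le_mul_of_nonneg_left t4 (by linarith : (0:ℝ) ≤ 2*δ)
      have E4 : 2*δ*(1 - 1/(2*δ)) = 2*δ - 1 := by field_simp
      have sq1 : 0 ≤ (2*δ-1)*(2*δ-1) := mul_nonneg c2 c2
      linarith [P3, P4, h6, hA, E4, sq1]
  rw [Real.log_div one_ne_zero (by positivity),
    Real.log_mul (by norm_num) hδ0', Real.log_div hδ0' h1',
    Real.log_div h1' hδ0', Real.log_one]
  nlinarith [key]
end
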